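/- arXiv:0801.0972 — 3 statements merged into one kernel-verified Lean document; each statement's English description precedes it below -/
import Mathlib

section
/- Let K ⊆ L be number fields, let p be a rational prime and m ≥ 1 an integer. Then Σ_{k=1}^m k·Φ_{p^k}(L) ≤ [L:K] · Σ_{k=1}^m k·Φ_{p^k}(K). -/
open NumberField

noncomputable section

/-- `Φ_q(K)`: the number of nonzero prime ideals of the ring of integers of `K`
of absolute norm `q`. -/
def PhiQ (K : Type*) [Field K] [NumberField K] (q : ℕ) : ℕ :=
  Nat.card {P : Ideal (𝓞 K) // P.IsPrime ∧ Ideal.absNorm P = q}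

/-!
Write `∑ k, k·Φ_{p^k}(E)` as the sum of `v_p(N 𝔓)` over the primes `𝔓` of `E` whose norm divides
`p^m`, and group the primes `𝔓` of `L` by the prime `𝔮 = 𝔓 ∩ 𝓞 K` below them. Since
`N 𝔓 = N 𝔮 ^ f(𝔓|𝔮)`, the prime `𝔮` is counted on the right and `v_p(N 𝔓) = f(𝔓|𝔮)·v_p(N 𝔮)`;
and the inertia degrees of the primes over `𝔮` add up to at most `∑ e·f = [L:K]`.
-/

open Finset Ideal

namespace Ideal

section Extension

variable {R S : Type*} [CommRing R] [CommRing S] [Algebra R S] [Module.Finite R S]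

theorem sum_inertiaDeg_le_finrank [IsDomain R] [Module.Flat R S] (p : Ideal R) [p.IsPrime]
    {s : Finset (Ideal S)} (hs : ∀ P ∈ s, P ∈ p.primesOver S) :
    ∑ P ∈ s, P.inertiaDeg R ≤ Module.finrank R S := by
  have hfin := Algebra.QuasiFinite.finite_primesOver (S := S) p
  have := hfin.fintype
  calc ∑ P ∈ s, P.inertiaDeg R
      ≤ ∑ P ∈ s, P.ramificationIdx R * P.inertiaDeg R := by
        gcongr with P hP
        have := (hs P hP).1
        exact Nat.le_mul_of_pos_left _ (ramificationIdx_pos P R)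
    _ ≤ ∑ P ∈ hfin.toFinset, P.ramificationIdx R * P.inertiaDeg R :=
        sum_le_sum_of_subset fun P hP => hfin.mem_toFinset.mpr (hs P hP)
    _ = ∑ P : p.primesOver S, P.1.ramificationIdx R * P.1.inertiaDeg R :=
        sum_subtype _ (fun _ => hfin.mem_toFinset) _
    _ = Module.finrank R S := sum_ramification_inertia_eq_finrank p S

variable [IsDedekindDomain R] [IsDedekindDomain S] [Module.Free ℤ R] [Module.Free ℤ S]
  (P : Ideal S) [P.IsPrime]

theorem absNorm_under_dvd_absNorm : absNorm (P.under R) ∣ absNorm P := by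
  rw [← absNorm_pow_inertiaDeg (P.under R) P]
  exact dvd_pow_self _ (inertiaDeg_pos P R).ne'

theorem factorization_absNorm (p : ℕ) :
    (absNorm P).factorization p = P.inertiaDeg R * (absNorm (P.under R)).factorization p := by
  rw [← absNorm_pow_inertiaDeg (P.under R) P, Nat.factorization_pow, Finsupp.smul_apply,
    smul_eq_mul]

end Extension

end Ideal

namespace NumberField

variable (E : Type*) [Field E] [NumberField E]

def primesOfNorm (q : ℕ) : Finset (Ideal (𝓞 E)) :=
  ((finite_setOfPred_absNorm_eq q).subset fun _ h => h.2 :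
    {P : Ideal (𝓞 E) | P.IsPrime ∧ absNorm P = q}.Finite).toFinset

variable {E} in
theorem mem_primesOfNorm {q : ℕ} {P : Ideal (𝓞 E)} :
    P ∈ primesOfNorm E q ↔ P.IsPrime ∧ absNorm P = q := by
  simp [primesOfNorm]

theorem phiQ_eq_card_primesOfNorm (q : ℕ) : PhiQ E q = #(primesOfNorm E q) := by
  rw [PhiQ, ← Nat.card_eq_finsetCard]
  exact Nat.card_congr (Equiv.subtypeEquivRight fun _ => mem_primesOfNorm.symm)

open Classical in
def primesOfNormDvdPrimePow (p m : ℕ) : Finset (Ideal (𝓞 E)) :=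
  (Icc 1 m).biUnion fun k => primesOfNorm E (p ^ k)

variable {E} in
theorem mem_primesOfNormDvdPrimePow {p m : ℕ} (hp : p.Prime) {P : Ideal (𝓞 E)} :
    P ∈ primesOfNormDvdPrimePow E p m ↔ P.IsPrime ∧ absNorm P ∣ p ^ m := by
  simp only [primesOfNormDvdPrimePow, mem_biUnion, mem_Icc, mem_primesOfNorm]
  constructor
  · rintro ⟨k, ⟨-, hkm⟩, hP, hnorm⟩
    exact ⟨hP, hnorm ▸ pow_dvd_pow p hkm⟩
  · rintro ⟨hP, hdvd⟩
    obtain ⟨k, hkm, hnorm⟩ := (Nat.dvd_prime_pow hp).mp hdvd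
    have hk : k ≠ 0 := by
      rintro rfl
      exact hP.ne_top (absNorm_eq_one_iff.mp hnorm)
    exact ⟨k, ⟨Nat.one_le_iff_ne_zero.mpr hk, hkm⟩, hP, hnorm⟩

theorem sum_mul_phiQ_eq_sum_factorization {p : ℕ} (hp : p.Prime) (m : ℕ) :
    ∑ k ∈ Icc 1 m, k * PhiQ E (p ^ k) =
      ∑ P ∈ primesOfNormDvdPrimePow E p m, (absNorm P).factorization p := by
  classical
  rw [primesOfNormDvdPrimePow, sum_biUnion]
  · refine sum_congr rfl fun k _ => ?_
    rw [phiQ_eq_card_primesOfNorm, mul_comm, ← smul_eq_mul, ← sum_const]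
    refine sum_congr rfl fun P hP => ?_
    rw [(mem_primesOfNorm.mp hP).2, hp.factorization_pow, Finsupp.single_eq_same]
  · intro k _ l _ hkl
    refine disjoint_left.mpr fun P hPk hPl => hkl ?_
    exact Nat.pow_right_injective hp.two_le
      ((mem_primesOfNorm.mp hPk).2.symm.trans (mem_primesOfNorm.mp hPl).2)

variable {K L : Type*} [Field K] [Field L] [NumberField K] [NumberField L] [Algebra K L]

theorem sum_factorization_absNorm_le (p : ℕ) (Q : Ideal (𝓞 K)) [Q.IsPrime]
    {s : Finset (Ideal (𝓞 L))} (hs : ∀ P ∈ s, P ∈ Q.primesOver (𝓞 L)) :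
    ∑ P ∈ s, (absNorm P).factorization p ≤
      Module.finrank K L * (absNorm Q).factorization p := by
  have hfactor : ∀ P ∈ s, (absNorm P).factorization p =
      P.inertiaDeg (𝓞 K) * (absNorm Q).factorization p := by
    intro P hP
    obtain ⟨hPprime, hPQ⟩ := hs P hP
    rw [factorization_absNorm (R := 𝓞 K) P, ← hPQ.over]
  rw [sum_congr rfl hfactor, ← sum_mul, IsFractionRing.finrank_eq (𝓞 K) K (𝓞 L) L]
  gcongr
  exact sum_inertiaDeg_le_finrank Q hs

end NumberField

theorem sum_phi_prime_powers_le_general (K L : Type*) [Field K] [Field L]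
    [NumberField K] [NumberField L] [Algebra K L]
    (p : ℕ) (hp : p.Prime) (m : ℕ) :
    ∑ k ∈ Finset.Icc 1 m, k * PhiQ L (p ^ k) ≤
      Module.finrank K L * ∑ k ∈ Finset.Icc 1 m, k * PhiQ K (p ^ k) := by
  have hunder : ∀ P ∈ primesOfNormDvdPrimePow L p m,
      P.under (𝓞 K) ∈ primesOfNormDvdPrimePow K p m := by
    intro P hP
    obtain ⟨hPprime, hdvd⟩ := (mem_primesOfNormDvdPrimePow hp).mp hP
    exact (mem_primesOfNormDvdPrimePow hp).mpr
      ⟨inferInstance, (absNorm_under_dvd_absNorm P).trans hdvd⟩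
  rw [sum_mul_phiQ_eq_sum_factorization L hp, sum_mul_phiQ_eq_sum_factorization K hp,
    ← sum_fiberwise_of_maps_to hunder, mul_sum]
  gcongr with Q hQ
  have : Q.IsPrime := ((mem_primesOfNormDvdPrimePow hp).mp hQ).1
  refine sum_factorization_absNorm_le p Q fun P hP => ?_
  obtain ⟨hPmem, hPQ⟩ := mem_filter.mp hP
  exact ⟨((mem_primesOfNormDvdPrimePow hp).mp hPmem).1, ⟨hPQ.symm⟩⟩

/-- Let `K ⊆ L` be number fields, `p` a rational prime and `m ≥ 1`.  Then
`Σ_{k=1}^m k·Φ_{p^k}(L) ≤ [L:K] · Σ_{k=1}^m k·Φ_{p^k}(K)`. -/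
theorem sum_phi_prime_powers_le (K L : Type*) [Field K] [Field L]
    [NumberField K] [NumberField L] [Algebra K L]
    (p : ℕ) (hp : p.Prime) (m : ℕ) (hm : 1 ≤ m) :
    ∑ k ∈ Finset.Icc 1 m, k * PhiQ L (p ^ k) ≤
      Module.finrank K L * ∑ k ∈ Finset.Icc 1 m, k * PhiQ K (p ^ k) :=
  sum_phi_prime_powers_le_general K L p hp m

end
end

section
/- Let K ⊆ L be number fields and let α_1, α_2 be nonnegative real numbers with 2·α_1 ≥ α_2. Then α_1·Φ_ℝ(L) + α_2·Φ_ℂ(L) ≤ [L:K]·(α_1·Φ_ℝ(K) + α_2·Φ_ℂ(K)). -/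
/-!
Write `r, c` for the numbers of real and complex places. Counting embeddings into `ℂ` gives
`r_L + 2 c_L = [L:K] (r_K + 2 c_K)`, and each of the `[L:K]` extensions of a non-real embedding of
`K` is non-real, so `[L:K] c_K ≤ c_L`. The difference of the two sides of the inequality is then
`(2 α₁ - α₂) (c_L - [L:K] c_K) ≥ 0`.
-/

open NumberField

noncomputable section

/-- `Φ_ℝ(K)`: the number of real places of `K`. -/
def PhiR (K : Type*) [Field K] [NumberField K] : ℕ :=
  Nat.card {w : InfinitePlace K // w.IsReal}

/-- `Φ_ℂ(K)`: the number of complex places of `K`. -/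
def PhiC (K : Type*) [Field K] [NumberField K] : ℕ :=
  Nat.card {w : InfinitePlace K // w.IsComplex}

open InfinitePlace Module

theorem PhiR_eq_nrRealPlaces (K : Type*) [Field K] [NumberField K] :
    PhiR K = nrRealPlaces K := by
  classical exact Nat.card_eq_fintype_card

theorem PhiC_eq_nrComplexPlaces (K : Type*) [Field K] [NumberField K] :
    PhiC K = nrComplexPlaces K := by
  classical exact Nat.card_eq_fintype_card

section Extensions

variable (K L : Type*) [Field K] [Field L] [Algebra K L]

theorem natCard_ringHom_comp_algebraMap_eq_finrank [FiniteDimensional K L]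
    [Algebra.IsSeparable K L] {Ω : Type*} [Field Ω] [IsAlgClosed Ω] (φ : K →+* Ω) :
    Nat.card {ψ : L →+* Ω // ψ.comp (algebraMap K L) = φ} = finrank K L := by
  let : Algebra K Ω := φ.toAlgebra
  let e : {ψ : L →+* Ω // ψ.comp (algebraMap K L) = φ} ≃ (L →ₐ[K] Ω) :=
    { toFun := fun ψ => ⟨ψ.1, fun x => RingHom.congr_fun ψ.2 x⟩
      invFun := fun f => ⟨f.toRingHom, RingHom.ext f.commutes⟩
      left_inv := fun _ => rfl
      right_inv := fun _ => rfl }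
  rw [Nat.card_congr e, AlgHom.natCard_of_splits K L Ω fun _ => IsAlgClosed.splits _]

variable [NumberField K] [NumberField L]

theorem finrank_mul_natCard_not_isReal_le :
    finrank K L * Nat.card {φ : K →+* ℂ // ¬ComplexEmbedding.IsReal φ} ≤
      Nat.card {ψ : L →+* ℂ // ¬ComplexEmbedding.IsReal ψ} := by
  let restrict : (L →+* ℂ) → (K →+* ℂ) := fun ψ => ψ.comp (algebraMap K L)
  have fibers : Nat.card {ψ : L →+* ℂ // ¬ComplexEmbedding.IsReal (restrict ψ)} =
      Nat.card {φ : K →+* ℂ // ¬ComplexEmbedding.IsReal φ} * finrank K L := by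
    classical
    rw [← Nat.card_congr (Equiv.sigmaSubtypeFiberEquivSubtype restrict
      (q := fun φ => ¬ComplexEmbedding.IsReal φ) fun _ => Iff.rfl), Nat.card_sigma,
      Finset.sum_const_nat fun φ _ => natCard_ringHom_comp_algebraMap_eq_finrank K L φ.1,
      Finset.card_univ, Nat.card_eq_fintype_card]
  rw [mul_comm, ← fibers]
  exact Nat.card_mono (Set.toFinite _) fun ψ hψ hψℝ => hψ (hψℝ.comp _)

theorem finrank_mul_nrComplexPlaces_le :
    finrank K L * nrComplexPlaces K ≤ nrComplexPlaces L := by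
  classical
  have h := finrank_mul_natCard_not_isReal_le K L
  rw [Nat.card_eq_fintype_card, Nat.card_eq_fintype_card, card_complex_embeddings,
    card_complex_embeddings] at h
  lia

theorem nrRealPlaces_add_two_mul_nrComplexPlaces_eq_finrank_mul :
    nrRealPlaces L + 2 * nrComplexPlaces L =
      finrank K L * (nrRealPlaces K + 2 * nrComplexPlaces K) := by
  rw [card_add_two_mul_card_eq_rank, card_add_two_mul_card_eq_rank, mul_comm,
    finrank_mul_finrank]

end Extensions

theorem archimedean_places_bound_general (K L : Type*) [Field K] [Field L]
    [NumberField K] [NumberField L] [Algebra K L]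
    (α₁ α₂ : ℝ) (h : α₂ ≤ 2 * α₁) :
    α₁ * PhiR L + α₂ * PhiC L ≤
      (Module.finrank K L : ℝ) * (α₁ * PhiR K + α₂ * PhiC K) := by
  simp only [PhiR_eq_nrRealPlaces, PhiC_eq_nrComplexPlaces]
  have degree : (nrRealPlaces L : ℝ) + 2 * nrComplexPlaces L =
      finrank K L * (nrRealPlaces K + 2 * nrComplexPlaces K) := by
    exact_mod_cast nrRealPlaces_add_two_mul_nrComplexPlaces_eq_finrank_mul K L
  have complex : (finrank K L : ℝ) * nrComplexPlaces K ≤ nrComplexPlaces L := by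
    exact_mod_cast finrank_mul_nrComplexPlaces_le K L
  linear_combination α₁ * degree + mul_le_mul_of_nonneg_left complex (sub_nonneg.2 h)

/-- Let `K ⊆ L` be number fields and `α₁, α₂` nonnegative reals with `2·α₁ ≥ α₂`.
Then `α₁·Φ_ℝ(L) + α₂·Φ_ℂ(L) ≤ [L:K]·(α₁·Φ_ℝ(K) + α₂·Φ_ℂ(K))`. -/
theorem archimedean_places_bound (K L : Type*) [Field K] [Field L]
    [NumberField K] [NumberField L] [Algebra K L]
    (α₁ α₂ : ℝ) (h₁ : 0 ≤ α₁) (h₂ : 0 ≤ α₂) (h : α₂ ≤ 2 * α₁) :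
    α₁ * PhiR L + α₂ * PhiC L ≤
      (Module.finrank K L : ℝ) * (α₁ * PhiR K + α₂ * PhiC K) :=
  archimedean_places_bound_general K L α₁ α₂ h

end
end

section
/- Let G be a finite group and H a subgroup of G. Then the cardinality of the union ⋃_{τ∈G} τHτ⁻¹ of all conjugates of H satisfies |⋃_{τ∈G} τHτ⁻¹| ≤ 1 + |G| − [G:H]. -/
/-!
Every element `≠ 1` of a conjugate of `H` lies in `c (H \ {1}) c⁻¹` for one of the `[G:H]`
representatives `c` of `G ⧸ H`, so the union has at most `1 + [G:H] (|H| - 1)` elements,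
and `[G:H] (|H| - 1) = |G| - [G:H]`.
-/

namespace Subgroup

variable {G : Type*} [Group G]

/-- When `K` normalizes `S`, the conjugate `τ S τ⁻¹` depends only on the coset `τ K`. -/
lemma iUnion_conj_image_subset_iUnion_quotient_out (K : Subgroup G) {S : Set G}
    (hS : ∀ k ∈ K, ∀ s ∈ S, k * s * k⁻¹ ∈ S) :
    (⋃ τ : G, (fun g => τ * g * τ⁻¹) '' S) ⊆
      ⋃ c : G ⧸ K, (fun g => c.out * g * c.out⁻¹) '' S := by
  rintro _ ⟨_, ⟨τ, rfl⟩, s, hs, rfl⟩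
  obtain ⟨k, hk⟩ := QuotientGroup.mk_out_eq_mul K τ
  refine Set.mem_iUnion.2 ⟨(τ : G ⧸ K), (k : G)⁻¹ * s * (k : G)⁻¹⁻¹, hS _ (K.inv_mem k.2) s hs, ?_⟩
  simp only [hk]
  group

lemma ncard_iUnion_conj_image_le (K : Subgroup G) [K.FiniteIndex] {S : Set G}
    (hS : ∀ k ∈ K, ∀ s ∈ S, k * s * k⁻¹ ∈ S) :
    (⋃ τ : G, (fun g => τ * g * τ⁻¹) '' S).ncard ≤ K.index * S.ncard := by
  rcases S.finite_or_infinite with hfin | hinf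
  · have : Fintype (G ⧸ K) := fintypeQuotientOfFiniteIndex
    calc (⋃ τ : G, (fun g => τ * g * τ⁻¹) '' S).ncard
        ≤ (⋃ c : G ⧸ K, (fun g => c.out * g * c.out⁻¹) '' S).ncard :=
          Set.ncard_le_ncard (K.iUnion_conj_image_subset_iUnion_quotient_out hS)
            (Set.finite_iUnion fun _ => hfin.image _)
      _ ≤ ∑ c : G ⧸ K, ((fun g => c.out * g * c.out⁻¹) '' S).ncard :=
          Set.ncard_iUnion_le_of_fintype _
      _ = K.index * S.ncard := by
          have hconj (c : G ⧸ K) : ((fun g => c.out * g * c.out⁻¹) '' S).ncard = S.ncard :=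
            Set.ncard_image_of_injective S (MulAut.conj c.out).injective
          simp only [hconj, Finset.sum_const, Finset.card_univ, smul_eq_mul, index_eq_card,
            Nat.card_eq_fintype_card]
  · have hunion : (⋃ τ : G, (fun g => τ * g * τ⁻¹) '' S).Infinite :=
      hinf.mono fun s hs => Set.mem_iUnion.2 ⟨1, s, hs, by group⟩
    simp [hunion.ncard]

end Subgroup

lemma iUnion_conj_image_subset_insert_one {G : Type*} [Group G] (S : Set G) :
    (⋃ τ : G, (fun g => τ * g * τ⁻¹) '' S) ⊆
      insert 1 (⋃ τ : G, (fun g => τ * g * τ⁻¹) '' (S \ {1})) := by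
  rintro _ ⟨_, ⟨τ, rfl⟩, s, hs, rfl⟩
  rcases eq_or_ne s 1 with rfl | hs1
  · simp
  · exact Or.inr (Set.mem_iUnion.2 ⟨τ, s, ⟨hs, hs1⟩, rfl⟩)

/-- For a finite group `G` and a subgroup `H ≤ G`, the union of all conjugates of `H`
has cardinality at most `1 + |G| − [G:H]`. -/
theorem card_union_conjugates_le (G : Type*) [Group G] [Finite G] (H : Subgroup G) :
    Set.ncard (⋃ τ : G, (fun g => τ * g * τ⁻¹) '' (H : Set G)) ≤
      1 + Nat.card G - H.index := by
  have hstable : ∀ k ∈ H, ∀ s ∈ (H : Set G) \ {1}, k * s * k⁻¹ ∈ (H : Set G) \ {1} :=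
    fun k hk s ⟨hs, hs1⟩ => ⟨H.mul_mem (H.mul_mem hk hs) (H.inv_mem hk), by simpa using hs1⟩
  have hpunctured : ((H : Set G) \ {1}).ncard = Nat.card H - 1 := by
    rw [Set.ncard_sdiff_singleton_of_mem H.one_mem, ← Nat.card_coe_set_eq]
    rfl
  calc Set.ncard (⋃ τ : G, (fun g => τ * g * τ⁻¹) '' (H : Set G))
      ≤ (insert 1 (⋃ τ : G, (fun g => τ * g * τ⁻¹) '' ((H : Set G) \ {1}))).ncard :=
        Set.ncard_le_ncard (iUnion_conj_image_subset_insert_one _) (Set.toFinite _)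
    _ ≤ (⋃ τ : G, (fun g => τ * g * τ⁻¹) '' ((H : Set G) \ {1})).ncard + 1 :=
        Set.ncard_insert_le _ _
    _ ≤ H.index * (Nat.card H - 1) + 1 := by
        rw [← hpunctured]
        exact Nat.add_le_add_right (H.ncard_iUnion_conj_image_le hstable) 1
    _ = 1 + Nat.card G - H.index := by
        have hcard := H.index_mul_card
        have : H.index ≤ H.index * Nat.card H := Nat.le_mul_of_pos_right _ Nat.card_pos
        rw [Nat.mul_sub_one]
        omega
end
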